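/- Let φ: C → C' be the isomorphism of the genus-2 curve C: Y² = F(X) to its complex conjugate curve C̄ given by (X̄, Ȳ) = ((-1 + √-3 + (3 - √-3)X)/(2√-3 + 6(1 - √-3)X), 24√-3·Y/(2√-3 + 6(1-√-3)X)³). Then the composition φ̄ ∘ φ equals the hyperelliptic involution w: (X,Y) ↦ (X,-Y). -/

import Mathlib

open Complex

/-- The Möbius transformation μ(X) = (-1 + √-3 + (3 - √-3)X)/(2√-3 + 6(1 - √-3)X),
where the root of -3 is a parameter. -/
noncomputable def mobius15 (s x : ℂ) : ℂ :=
  (-1 + s + (3 - s) * x) / (2 * s + 6 * (1 - s) * x)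

/-- The denominator q(X) = 2√-3 + 6(1 - √-3)X. -/
noncomputable def mobiusDen15 (s x : ℂ) : ℂ := 2 * s + 6 * (1 - s) * x

/-!
μ is the linear fractional map of the matrix `M s = !![3 - s, -1 + s; 6(1 - s), 2s]`, and q is its
denominator. Composing linear fractional maps multiplies their matrices, the denominators
multiplying along (a cocycle), and `s ^ 2 = -3` gives `M (-s) * M s = -12 • 1`. Hence μ̄ ∘ μ = id and
q̄(μ X) · q(X) = -12, so the Y-factor of φ̄ ∘ φ is `24 (-s) · 24 s / (-12) ^ 3 = -576 s ^ 2 / 1728 = -1`.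
-/

open Matrix

section LinearFractional

variable {K : Type*} [Field K]

def linearFracDen (M : Matrix (Fin 2) (Fin 2) K) (x : K) : K := M 1 0 * x + M 1 1

def linearFracMap (M : Matrix (Fin 2) (Fin 2) K) (x : K) : K :=
  (M 0 0 * x + M 0 1) / linearFracDen M x

theorem linearFracMap_row_mul_linearFracDen (M N : Matrix (Fin 2) (Fin 2) K) (i : Fin 2) {x : K}
    (hx : linearFracDen M x ≠ 0) :
    (N i 0 * linearFracMap M x + N i 1) * linearFracDen M x = (N * M) i 0 * x + (N * M) i 1 := by
  rw [linearFracMap, add_mul, mul_assoc, div_mul_cancel₀ _ hx]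
  simp only [linearFracDen, mul_apply, Fin.sum_univ_two]
  ring

theorem linearFracDen_mul (M N : Matrix (Fin 2) (Fin 2) K) {x : K}
    (hx : linearFracDen M x ≠ 0) :
    linearFracDen N (linearFracMap M x) * linearFracDen M x = linearFracDen (N * M) x :=
  linearFracMap_row_mul_linearFracDen M N 1 hx

theorem linearFracMap_mul (M N : Matrix (Fin 2) (Fin 2) K) {x : K}
    (hx : linearFracDen M x ≠ 0) :
    linearFracMap N (linearFracMap M x) = linearFracMap (N * M) x := by
  rw [linearFracMap.eq_1 (N * M), ← linearFracMap_row_mul_linearFracDen M N 0 hx,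
    ← linearFracDen_mul M N hx, mul_div_mul_right _ _ hx, linearFracMap]

theorem linearFracDen_smul_one (c x : K) :
    linearFracDen (c • (1 : Matrix (Fin 2) (Fin 2) K)) x = c := by
  simp [linearFracDen]

theorem linearFracMap_smul_one {c : K} (hc : c ≠ 0) (x : K) :
    linearFracMap (c • (1 : Matrix (Fin 2) (Fin 2) K)) x = x := by
  rw [linearFracMap, linearFracDen_smul_one]
  simp [mul_div_cancel_left₀ x hc]

end LinearFractional

def phiMatrix {R : Type*} [CommRing R] (s : R) : Matrix (Fin 2) (Fin 2) R :=
  !![3 - s, -1 + s; 6 * (1 - s), 2 * s]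

theorem phiMatrix_neg_mul_phiMatrix {R : Type*} [CommRing R] {s : R} (hs : s ^ 2 = -3) :
    phiMatrix (-s) * phiMatrix s = (-12 : R) • 1 := by
  rw [phiMatrix, phiMatrix, mul_fin_two, one_fin_two, smul_of, EmbeddingLike.apply_eq_iff_eq]
  simp only [smul_cons, smul_eq_mul, mul_one, mul_zero, smul_empty, vecCons_inj, and_true]
  refine ⟨⟨?_, ?_⟩, ?_, ?_⟩
  · linear_combination 5 * hs
  · linear_combination -hs
  · linear_combination 6 * hs
  · linear_combination 2 * hs

theorem mobiusDen15_eq_linearFracDen (s x : ℂ) :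
    mobiusDen15 s x = linearFracDen (phiMatrix s) x :=
  add_comm _ _

theorem mobius15_eq_linearFracMap (s x : ℂ) : mobius15 s x = linearFracMap (phiMatrix s) x :=
  congrArg₂ (· / ·) (add_comm _ _) (mobiusDen15_eq_linearFracDen s x)

theorem conj_phi_comp_phi_eq_hyperelliptic_involution
    (s : ℂ) (hs : s ^ 2 = -3) (x y : ℂ)
    (hq : mobiusDen15 s x ≠ 0) :
    mobius15 (-s) (mobius15 s x) = x ∧
    24 * (-s) * (24 * s * y / (mobiusDen15 s x) ^ 3) /
        (mobiusDen15 (-s) (mobius15 s x)) ^ 3 = -y := by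
  rw [mobiusDen15_eq_linearFracDen] at hq
  have hden : mobiusDen15 (-s) (mobius15 s x) * mobiusDen15 s x = -12 := by
    rw [mobius15_eq_linearFracMap, mobiusDen15_eq_linearFracDen, mobiusDen15_eq_linearFracDen,
      linearFracDen_mul _ _ hq, phiMatrix_neg_mul_phiMatrix hs, linearFracDen_smul_one]
  refine ⟨?_, ?_⟩
  · rw [mobius15_eq_linearFracMap, mobius15_eq_linearFracMap, linearFracMap_mul _ _ hq,
      phiMatrix_neg_mul_phiMatrix hs, linearFracMap_smul_one (by norm_num)]
  · calc 24 * (-s) * (24 * s * y / (mobiusDen15 s x) ^ 3) / (mobiusDen15 (-s) (mobius15 s x)) ^ 3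
        = -576 * s ^ 2 * y / (mobiusDen15 (-s) (mobius15 s x) * mobiusDen15 s x) ^ 3 := by ring
      _ = -y := by rw [hden, hs]; ring
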